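/- arXiv:math/0401121 — 3 statements merged into one kernel-verified Lean document; each statement's English description precedes it below -/
import Mathlib

section
/- The ratio n(y)/w(y) tends to 0 as y → ∞ along the cofinite filter on Δ_Γ; that is, for every ε > 0 the set {y ∈ Δ_Γ : y ≠ e and n(y)/w(y) ≥ ε} is finite. -/
open Function

/-- The group `Δ_Γ = ⊕_Γ Δ` of finitely supported functions `Γ → Δ`
under pointwise multiplication, as a subgroup of `Γ → Δ`. -/
def DeltaGamma (Γ Δ : Type*) [Group Δ] : Subgroup (Γ → Δ) where
  carrier := {y | (mulSupport y).Finite}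
  one_mem' := by simp [mulSupport_one]
  mul_mem' := by
    intro a b ha hb
    exact ((Set.Finite.union ha hb).subset (mulSupport_mul a b))
  inv_mem' := by
    intro a ha
    simpa [mulSupport_inv] using ha

/-- The Bernoulli shift of `Γ` on `Δ_Γ`: `(s·y)(t) = y(s⁻¹t)`. -/
def bshift {Γ Δ : Type*} [Group Γ] [Group Δ] (s : Γ) (y : DeltaGamma Γ Δ) :
    DeltaGamma Γ Δ :=
  ⟨fun t => (y : Γ → Δ) (s⁻¹ * t), by
    have hy : (mulSupport (y : Γ → Δ)).Finite := y.2
    refine Set.Finite.subset (hy.image (fun t => s * t)) ?_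
    intro t ht
    exact ⟨s⁻¹ * t, ht, by group⟩⟩

/-- A proper length function on a group. -/
structure IsProperLength {G : Type*} [Group G] (l : G → ℝ) : Prop where
  nonneg : ∀ s, 0 ≤ l s
  eq_zero_iff : ∀ s, l s = 0 ↔ s = 1
  mul_le : ∀ s t, l (s * t) ≤ l s + l t
  inv_eq : ∀ s, l s⁻¹ = l s
  proper : ∀ R : ℝ, {s : G | l s ≤ R}.Finite

open Classical in
/-- `w(y,t) = l_Γ(t) + l_Δ(y t)` if `t ∈ supp y`, and `0` otherwise. -/
noncomputable def wt {Γ Δ : Type*} [Group Δ] (lG : Γ → ℝ) (lD : Δ → ℝ)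
    (y : Γ → Δ) (t : Γ) : ℝ :=
  if y t ≠ 1 then lG t + lD (y t) else 0

/-- `w(y) = Σ_t w(y,t)`. -/
noncomputable def w {Γ Δ : Type*} [Group Δ] (lG : Γ → ℝ) (lD : Δ → ℝ)
    (y : Γ → Δ) : ℝ :=
  ∑ᶠ t, wt lG lD y t

/-!
Let `N` be the number of `t ∈ Γ` with `l_Γ(t) ≤ 2/ε`. Every other point of `supp y` contributes
more than `2/ε` to `w(y)`, so `n(y) ≤ N + ε w(y) / 2`. Hence `n(y) ≥ ε w(y)` forces
`w(y) ≤ 2N/ε`, and by properness of `l_Γ` and `l_Δ` only finitely many `y` have bounded weight: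
their supports and values lie in fixed finite balls.
-/

theorem Set.Finite.setOf_mulSupport_subset {α β : Type*} [One β] {s : Set α} {t : Set β}
    (hs : s.Finite) (ht : t.Finite) :
    {f : α → β | mulSupport f ⊆ s ∧ ∀ a ∈ mulSupport f, f a ∈ t}.Finite := by
  have : Finite s := hs.to_subtype
  refine Set.Finite.of_finite_image (f := fun f (a : s) => f a)
    ((Set.Finite.pi (t := fun _ => insert 1 t) fun _ => ht.insert 1).subset ?_) ?_
  · rintro _ ⟨f, ⟨-, hft⟩, rfl⟩ a -
    by_cases ha : f a = 1
    · exact Or.inl ha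
    · exact Or.inr (hft a ha)
  · intro f ⟨hfs, _⟩ g ⟨hgs, _⟩ hfg
    funext a
    by_cases ha : a ∈ s
    · exact congrFun hfg ⟨a, ha⟩
    · rw [notMem_mulSupport.mp fun h => ha (hfs h), notMem_mulSupport.mp fun h => ha (hgs h)]

section Weight

variable {Γ Δ : Type*} [Group Δ] {lG : Γ → ℝ} {lD : Δ → ℝ} {y : Γ → Δ}

theorem w_eq_sum (hy : (mulSupport y).Finite) :
    w lG lD y = ∑ t ∈ hy.toFinset, (lG t + lD (y t)) := by
  classical
  rw [w, finsum_eq_sum_of_support_subset _ fun t ht => ?_]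
  · refine Finset.sum_congr rfl fun t ht => ?_
    rw [wt, if_pos (by simpa using ht)]
  · rw [Set.Finite.coe_toFinset]
    contrapose! ht
    simp [wt, notMem_mulSupport.mp ht]

theorem le_w_of_mem_mulSupport (hG : ∀ t, 0 ≤ lG t) (hD : ∀ d, 0 ≤ lD d)
    (hy : (mulSupport y).Finite) {t : Γ} (ht : t ∈ mulSupport y) :
    lG t + lD (y t) ≤ w lG lD y := by
  rw [w_eq_sum hy]
  exact Finset.single_le_sum (f := fun t => lG t + lD (y t))
    (fun s _ => add_nonneg (hG s) (hD _)) (hy.mem_toFinset.mpr ht)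

/-- Points of the support outside the ball `{l_Γ ≤ R}` each contribute more than `R` to `w`. -/
theorem card_mulSupport_le (hG : ∀ t, 0 ≤ lG t) (hD : ∀ d, 0 ≤ lD d)
    (hy : (mulSupport y).Finite) {R : ℝ} (hR : 0 < R) (hball : {t | lG t ≤ R}.Finite) :
    (Nat.card (mulSupport y) : ℝ) ≤ Nat.card {t | lG t ≤ R} + w lG lD y / R := by
  classical
  set s := hy.toFinset
  set F := hball.toFinset
  have hfar : R * (s \ F).card ≤ w lG lD y :=
    calc R * (s \ F).card = ∑ _t ∈ s \ F, R := by rw [Finset.sum_const, nsmul_eq_mul, mul_comm]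
      _ ≤ ∑ t ∈ s \ F, (lG t + lD (y t)) := Finset.sum_le_sum fun t ht => by
          have : R < lG t := by simpa [F] using (Finset.mem_sdiff.mp ht).2
          linarith [hD (y t)]
      _ ≤ ∑ t ∈ s, (lG t + lD (y t)) :=
          Finset.sum_le_sum_of_subset_of_nonneg Finset.sdiff_subset
            fun t _ _ => add_nonneg (hG t) (hD _)
      _ = w lG lD y := (w_eq_sum hy).symm
  have hsplit : s.card ≤ F.card + (s \ F).card :=
    (Finset.card_inter_add_card_sdiff s F).symm.le.trans
      (Nat.add_le_add_right (Finset.card_le_card Finset.inter_subset_right) _)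
  rw [Nat.card_coe_set_eq, Set.ncard_eq_toFinset_card _ hy, Nat.card_coe_set_eq,
    Set.ncard_eq_toFinset_card _ hball]
  have : ((s \ F).card : ℝ) ≤ w lG lD y / R := by rw [le_div_iff₀' hR]; exact hfar
  exact (Nat.cast_le.mpr hsplit).trans (by push_cast; linarith)

theorem finite_setOf_w_le (hG : ∀ t, 0 ≤ lG t) (hD : ∀ d, 0 ≤ lD d) {M : ℝ}
    (hGM : {t | lG t ≤ M}.Finite) (hDM : {d | lD d ≤ M}.Finite) :
    {y : Γ → Δ | (mulSupport y).Finite ∧ w lG lD y ≤ M}.Finite := by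
  refine (hGM.setOf_mulSupport_subset hDM).subset fun y ⟨hy, hwM⟩ =>
    ⟨fun t ht => ?_, fun t ht => ?_⟩
  · show lG t ≤ M
    linarith [le_w_of_mem_mulSupport hG hD hy ht, hD (y t)]
  · show lD (y t) ≤ M
    linarith [le_w_of_mem_mulSupport hG hD hy ht, hG t]

end Weight

theorem stmt4_general {Γ Δ : Type*} [Group Γ] [Group Δ]
    (lG : Γ → ℝ) (lD : Δ → ℝ) (hG : IsProperLength lG) (hD : IsProperLength lD)
    (ε : ℝ) (hε : 0 < ε) :
    {y : DeltaGamma Γ Δ | y ≠ 1 ∧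
      ε ≤ (Nat.card (mulSupport (y : Γ → Δ)) : ℝ) / w lG lD (y : Γ → Δ)}.Finite := by
  set N : ℝ := (Nat.card {t | lG t ≤ 2 / ε} : ℝ)
  refine ((finite_setOf_w_le hG.nonneg hD.nonneg (hG.proper (2 * N / ε))
    (hD.proper _)).preimage Subtype.val_injective.injOn).subset ?_
  rintro y ⟨-, hεy⟩
  have hw : 0 < w lG lD y := by
    by_contra! h
    exact (hε.trans_le hεy).not_ge (div_nonpos_of_nonneg_of_nonpos (Nat.cast_nonneg _) h)
  have hn := card_mulSupport_le hG.nonneg hD.nonneg y.2 (div_pos two_pos hε) (hG.proper _)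
  rw [le_div_iff₀ hw] at hεy
  rw [div_div_eq_mul_div] at hn
  refine ⟨y.2, ?_⟩
  rw [le_div_iff₀ hε]
  -- `ε w ≤ n ≤ N + ε w / 2`
  linarith

/-- `n(y)/w(y) → 0` as `y → ∞` along the cofinite filter on `Δ_Γ`:
for every `ε > 0`, the set `{y ∈ Δ_Γ : y ≠ e and n(y)/w(y) ≥ ε}` is finite,
where `n(y) = |supp y|`. -/
theorem stmt4 {Γ Δ : Type*} [Group Γ] [Group Δ] [Countable Γ] [Countable Δ]
    (lG : Γ → ℝ) (lD : Δ → ℝ) (hG : IsProperLength lG) (hD : IsProperLength lD)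
    (ε : ℝ) (hε : 0 < ε) :
    {y : DeltaGamma Γ Δ | y ≠ 1 ∧
      ε ≤ (Nat.card (mulSupport (y : Γ → Δ)) : ℝ) / w lG lD (y : Γ → Δ)}.Finite :=
  stmt4_general lG lD hG hD ε hε
end

section
/- Let Γ be a countable group acting on a countable set K and let V : ℓ²(K) → ℓ²(Γ) be a linear isometry. For x ∈ K define μ_x ∈ ℓ¹(Γ) by μ_x(t) = |(Vδ_x)(t)|². Then for every s ∈ Γ and x ∈ K, ‖s·μ_x − μ_{s·x}‖₁ ≤ 2·(2 − 2 Re⟨V*λ(s)V δ_x, δ_{s·x}⟩)^{1/2}, where λ is the left-regular representation of Γ on ℓ²(Γ) and the quantity under the square root is nonnegative. -/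
/-!
Put `ξ = λ(s) V δ_x` and `η = V δ_{s·x}`; both are unit vectors, since `V` is an isometry and
`λ(s)` merely permutes coordinates. Hence `2 - 2 Re⟨ξ, η⟩ = ‖ξ - η‖²`, while
`s·μ_x - μ_{s·x} = |ξ|² - |η|²` pointwise. Factoring `|ξ t|² - |η t|²` and applying
Cauchy–Schwarz gives `‖ |ξ|² - |η|² ‖₁ ≤ ‖ξ - η‖ (‖ξ‖ + ‖η‖) = 2 ‖ξ - η‖`.
-/

open scoped ENNReal

namespace lp

theorem norm_eq_of_apply_eq_comp_equiv {ι ι' E : Type*} [NormedAddCommGroup E] {p : ℝ≥0∞}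
    [Fact (1 ≤ p)] (hp : 0 < p.toReal) (σ : ι ≃ ι') {f : lp (fun _ : ι' => E) p} {g : lp (fun _ : ι => E) p}
    (h : ∀ i, g i = f (σ i)) : ‖g‖ = ‖f‖ := by
  rw [← Real.rpow_left_inj (norm_nonneg g) (norm_nonneg f) hp.ne', norm_rpow_eq_tsum hp,
    norm_rpow_eq_tsum hp]
  simp_rw [h]
  exact σ.tsum_eq fun i => ‖f i‖ ^ p.toReal

theorem tsum_abs_norm_sq_sub_norm_sq_le {ι : Type*} {E : ι → Type*}
    [∀ i, NormedAddCommGroup (E i)] (f g : lp E 2) :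
    ∑' i, |‖f i‖ ^ 2 - ‖g i‖ ^ 2| ≤ ‖f - g‖ * (‖f‖ + ‖g‖) := by
  have hpq : (2 : ℝ≥0∞).toReal.HolderConjugate (2 : ℝ≥0∞).toReal := by
    simpa using Real.HolderConjugate.two_two
  have hpointwise (i : ι) :
      |‖f i‖ ^ 2 - ‖g i‖ ^ 2| ≤ ‖(f - g) i‖ * ‖f i‖ + ‖(f - g) i‖ * ‖g i‖ := by
    have hfactor : |‖f i‖ ^ 2 - ‖g i‖ ^ 2| = |‖f i‖ - ‖g i‖| * (‖f i‖ + ‖g i‖) := by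
      rw [← abs_of_nonneg (by positivity : 0 ≤ ‖f i‖ + ‖g i‖), ← abs_mul]
      ring_nf
    rw [hfactor, ← mul_add, coeFn_sub, Pi.sub_apply]
    gcongr
    exact abs_norm_sub_norm_le _ _
  have hsum := (lp.summable_mul hpq (f - g) f).add (lp.summable_mul hpq (f - g) g)
  calc ∑' i, |‖f i‖ ^ 2 - ‖g i‖ ^ 2|
      ≤ ∑' i, (‖(f - g) i‖ * ‖f i‖ + ‖(f - g) i‖ * ‖g i‖) :=
        (hsum.of_nonneg_of_le (fun _ => abs_nonneg _) hpointwise).tsum_le_tsum hpointwise hsum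
    _ = ∑' i, ‖(f - g) i‖ * ‖f i‖ + ∑' i, ‖(f - g) i‖ * ‖g i‖ :=
        (lp.summable_mul hpq (f - g) f).tsum_add (lp.summable_mul hpq (f - g) g)
    _ ≤ ‖f - g‖ * ‖f‖ + ‖f - g‖ * ‖g‖ :=
        add_le_add (lp.tsum_mul_le_mul_norm' hpq _ _) (lp.tsum_mul_le_mul_norm' hpq _ _)
    _ = ‖f - g‖ * (‖f‖ + ‖g‖) := (mul_add _ _ _).symm

end lp

theorem stmt10_general {Γ K : Type*} [Group Γ]
    [DecidableEq K] [MulAction Γ K]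
    (V : lp (fun _ : K => ℂ) 2 →ₗᵢ[ℂ] lp (fun _ : Γ => ℂ) 2)
    (lam : Γ → (lp (fun _ : Γ => ℂ) 2 →L[ℂ] lp (fun _ : Γ => ℂ) 2))
    (hlam : ∀ (s : Γ) (ξ : lp (fun _ : Γ => ℂ) 2) (t : Γ), (lam s ξ) t = ξ (s⁻¹ * t))
    (μ : K → Γ → ℝ)
    (hμ : ∀ x t, μ x t = ‖(V (lp.single 2 x 1)) t‖ ^ 2)
    (s : Γ) (x : K) :
    0 ≤ 2 - 2 * (inner ℂ ((ContinuousLinearMap.adjoint V.toContinuousLinearMap)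
          ((lam s) (V (lp.single 2 x 1)))) (lp.single 2 (s • x) 1) : ℂ).re ∧
    (∑' t, |μ x (s⁻¹ * t) - μ (s • x) t|) ≤
      2 * Real.sqrt (2 - 2 * (inner ℂ ((ContinuousLinearMap.adjoint V.toContinuousLinearMap)
          ((lam s) (V (lp.single 2 x 1)))) (lp.single 2 (s • x) 1) : ℂ).re) := by
  have hV_single (y : K) : ‖V (lp.single 2 y 1)‖ = 1 := by
    simp [lp.norm_single]
  set ξ := lam s (V (lp.single 2 x 1))
  set η := V (lp.single 2 (s • x) 1)
  have hξ : ‖ξ‖ = 1 := (lp.norm_eq_of_apply_eq_comp_equiv (by norm_num)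
    (Equiv.mulLeft s⁻¹) (hlam s _)).trans (hV_single x)
  have hη : ‖η‖ = 1 := hV_single (s • x)
  have hdist : ‖ξ - η‖ ^ 2 = 2 - 2 * (inner ℂ ξ η : ℂ).re := by
    rw [norm_sub_sq (𝕜 := ℂ), hξ, hη, RCLike.re_to_complex]
    ring
  have hμ_diff : ∑' t, |μ x (s⁻¹ * t) - μ (s • x) t| = ∑' t, |‖ξ t‖ ^ 2 - ‖η t‖ ^ 2| := by
    simp only [hμ, ξ, η, hlam]
  rw [ContinuousLinearMap.adjoint_inner_left, LinearIsometry.coe_toContinuousLinearMap,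
    ← hdist, Real.sqrt_sq (norm_nonneg _), hμ_diff]
  refine ⟨sq_nonneg _, ?_⟩
  calc ∑' t, |‖ξ t‖ ^ 2 - ‖η t‖ ^ 2| ≤ ‖ξ - η‖ * (‖ξ‖ + ‖η‖) :=
        lp.tsum_abs_norm_sq_sub_norm_sq_le ξ η
    _ = 2 * ‖ξ - η‖ := by rw [hξ, hη]; ring

/-- Let `Γ` act on a countable set `K`, let `V : ℓ²(K) → ℓ²(Γ)` be a
linear isometry, and let `μ_x(t) = |(Vδ_x)(t)|²`. Then for every `s ∈ Γ` and `x ∈ K`,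
the quantity `2 − 2 Re⟨V*λ(s)Vδ_x, δ_{s·x}⟩` is nonnegative and
`‖s·μ_x − μ_{s·x}‖₁ ≤ 2 (2 − 2 Re⟨V*λ(s)Vδ_x, δ_{s·x}⟩)^{1/2}`,
where `λ` is the left-regular representation of `Γ` on `ℓ²(Γ)`. -/
theorem stmt10 {Γ K : Type*} [Group Γ] [Countable Γ] [Countable K]
    [DecidableEq Γ] [DecidableEq K] [MulAction Γ K]
    (V : lp (fun _ : K => ℂ) 2 →ₗᵢ[ℂ] lp (fun _ : Γ => ℂ) 2)
    (lam : Γ → (lp (fun _ : Γ => ℂ) 2 →L[ℂ] lp (fun _ : Γ => ℂ) 2))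
    (hlam : ∀ (s : Γ) (ξ : lp (fun _ : Γ => ℂ) 2) (t : Γ), (lam s ξ) t = ξ (s⁻¹ * t))
    (μ : K → Γ → ℝ)
    (hμ : ∀ x t, μ x t = ‖(V (lp.single 2 x 1)) t‖ ^ 2)
    (s : Γ) (x : K) :
    0 ≤ 2 - 2 * (inner ℂ ((ContinuousLinearMap.adjoint V.toContinuousLinearMap)
          ((lam s) (V (lp.single 2 x 1)))) (lp.single 2 (s • x) 1) : ℂ).re ∧
    (∑' t, |μ x (s⁻¹ * t) - μ (s • x) t|) ≤
      2 * Real.sqrt (2 - 2 * (inner ℂ ((ContinuousLinearMap.adjoint V.toContinuousLinearMap)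
          ((lam s) (V (lp.single 2 x 1)))) (lp.single 2 (s • x) 1) : ℂ).re) :=
  stmt10_general V lam hlam μ hμ s x
end

section
/- Let V : ℓ²(Δ_Γ) → ℓ²(Δ_Γ × Γ) be the linear isometry determined by Vδ_y = δ_y ⊗ ξ_y, i.e., (Vδ_y)(z,t) = ξ_y(t) if z = y and 0 otherwise (with ξ_e defined to be the basis vector δ_{e_Γ}). For s ∈ Γ let W(s) be the unitary of ℓ²(Δ_Γ × Γ) permuting the basis by δ_{(y,t)} ↦ δ_{(s·y, st)}, and let σ(s) be the unitary of ℓ²(Δ_Γ) given by σ(s)δ_y = δ_{s·y}, where s·y is the Bernoulli shift. Then for every s ∈ Γ the operator V* W(s) V − σ(s) on ℓ²(Δ_Γ) is compact. -/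
open Function

open Classical in
/-- The coefficients of the unit vector `ξ_y ∈ ℓ²(Γ)`, viewed as complex numbers:
`ξ_y(t) = (w(y,t)/w(y))^{1/2}` for `y ≠ e`, and `ξ_e = δ_{e_Γ}`. -/
noncomputable def xiC {Γ Δ : Type*} [Group Γ] [Group Δ] (lG : Γ → ℝ) (lD : Δ → ℝ)
    (y : DeltaGamma Γ Δ) (t : Γ) : ℂ :=
  if y = 1 then (if t = 1 then 1 else 0)
  else (Real.sqrt (wt lG lD (y : Γ → Δ) t / w lG lD (y : Γ → Δ)) : ℂ)


open Filter Topology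

/-!
`V* W(s) V - σ(s)` maps `δ_y` to `(⟨ξ_y, s⁻¹·ξ_{s·y}⟩ - 1) δ_{s·y}`, so after composing
with `σ(s⁻¹)` it becomes diagonal, and it suffices that the diagonal entries tend to zero: a
diagonal operator with `c₀` entries is a norm limit of finite-rank ones.

Since `w(s·y, st) - w(y, t) = l_Γ(st) - l_Γ(t)` is bounded by `l_Γ(s)`, the Hellinger-type
bound `|Σ √(α β) - 1| ≤ ‖α - β‖₁` gives `|⟨ξ_y, s⁻¹·ξ_{s·y}⟩ - 1| ≤ 2 l_Γ(s) |supp y| / w(y)`. If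
`w(y) ≤ C |supp y|`, at most as many points of `supp y` lie outside the finite ball `{l_Γ ≤ 2C}`
as inside it, so `w(y)` is bounded, and properness of `l_Γ` and `l_Δ` leaves only finitely many
such `y`.
-/

notation "ℓ²(" ι ")" => lp (fun _ : ι => ℂ) 2

lemma isCompactOperator_smulRight {E F : Type*} [NormedAddCommGroup E] [NormedSpace ℂ E]
    [NormedAddCommGroup F] [NormedSpace ℂ F] (φ : E →L[ℂ] ℂ) (v : F) :
    IsCompactOperator (φ.smulRight v) :=
  (isCompactOperator_of_locallyCompactSpace_dom φ).clm_comp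
    (ContinuousLinearMap.toSpanSingleton ℂ v)

namespace lp

variable {ι κ : Type*} [DecidableEq ι]

lemma single_one_apply (i j : ι) :
    (lp.single 2 i (1 : ℂ) : ℓ²(ι)) j = if j = i then 1 else 0 := by
  simp [lp.single_apply, Pi.single_apply]

lemma ext_single_one {F : Type*} [AddCommMonoid F] [Module ℂ F] [TopologicalSpace F] [T2Space F]
    {A B : ℓ²(ι) →L[ℂ] F} (h : ∀ i, A (lp.single 2 i 1) = B (lp.single 2 i 1)) :
    A = B := by
  refine lp.ext_continuousLinearMap ENNReal.ofNat_ne_top fun i => ?_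
  ext
  simpa [← lp.single_smul] using h i

lemma adjoint_apply [DecidableEq κ] (A : ℓ²(ι) →L[ℂ] ℓ²(κ)) (u : ℓ²(κ)) (i : ι) :
    (A.adjoint u) i = inner ℂ (A (lp.single 2 i 1)) u := by
  rw [← ContinuousLinearMap.adjoint_inner_right, lp.inner_single_left]
  simp

variable {D : ℓ²(ι) →L[ℂ] ℓ²(ι)} {d : ι → ℂ}

lemma apply_eq_mul_of_apply_single (hD : ∀ i, D (lp.single 2 i 1) = d i • lp.single 2 i 1)
    (f : ℓ²(ι)) (i : ι) : D f i = d i * f i := by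
  have hsum : HasSum (fun j => D (lp.single 2 j (f j)) i) (D f i) :=
    ((lp.hasSum_single ENNReal.ofNat_ne_top f).mapL D).mapL (lp.evalCLM ℂ (fun _ : ι => ℂ) 2 i)
  refine hsum.unique ?_
  convert hasSum_ite_eq i (d i * f i) using 1
  funext j
  rw [← mul_one (f j), ← smul_eq_mul, lp.single_smul, map_smul, hD]
  by_cases hij : j = i
  · subst hij; simp [mul_comm]
  · simp [lp.single_apply, Ne.symm hij, hij]

lemma opNorm_le_of_apply_single (hD : ∀ i, D (lp.single 2 i 1) = d i • lp.single 2 i 1)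
    {ε : ℝ} (hε : 0 ≤ ε) (hd : ∀ i, ‖d i‖ ≤ ε) : ‖D‖ ≤ ε := by
  refine D.opNorm_le_bound hε fun f => ?_
  calc ‖D f‖ ≤ ‖(ε : ℂ) • f‖ := lp.norm_mono two_ne_zero fun i => by
        rw [apply_eq_mul_of_apply_single hD, lp.coeFn_smul, Pi.smul_apply, norm_mul, norm_smul,
          Complex.norm_of_nonneg hε]
        gcongr
        exact hd i
    _ = ε * ‖f‖ := by rw [norm_smul, Complex.norm_of_nonneg hε]

lemma isCompactOperator_of_apply_single (hD : ∀ i, D (lp.single 2 i 1) = d i • lp.single 2 i 1)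
    (hd : Tendsto d cofinite (𝓝 0)) : IsCompactOperator D := by
  let S : Finset ι → ℓ²(ι) →L[ℂ] ℓ²(ι) := fun F =>
    ∑ i ∈ F, d i • (innerSL ℂ (lp.single 2 i (1 : ℂ))).smulRight (lp.single 2 i 1)
  have hS : ∀ F, IsCompactOperator (S F) := fun F =>
    Submodule.sum_mem (compactOperator (RingHom.id ℂ) ℓ²(ι) ℓ²(ι))
      fun i _ => (isCompactOperator_smulRight _ _).smul (d i)
  have hDS : ∀ F i, (D - S F) (lp.single 2 i 1) =
      (if i ∈ F then 0 else d i) • lp.single 2 i 1 := by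
    intro F i
    have : S F (lp.single 2 i 1) = if i ∈ F then d i • lp.single 2 i 1 else 0 := by
      simp only [S, sum_apply, smul_apply, ContinuousLinearMap.smulRight_apply, innerSL_apply_apply,
        lp.inner_single_left, single_one_apply]
      simp [ite_smul, Finset.sum_ite_eq']
    rw [sub_apply, hD, this]
    split_ifs <;> simp
  refine isCompactOperator_of_tendsto (l := atTop) (Metric.tendsto_atTop.mpr fun ε hε => ?_)
    (Eventually.of_forall hS)
  have hfin := eventually_cofinite.mp (Metric.tendsto_nhds.mp hd (ε / 2) (half_pos hε))
  refine ⟨hfin.toFinset, fun F hF => ?_⟩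
  rw [dist_comm, dist_eq_norm]
  refine (opNorm_le_of_apply_single (hDS F) (half_pos hε).le fun i => ?_).trans_lt
    (half_lt_self hε)
  split_ifs with hi
  · simpa using (half_pos hε).le
  · have hi' : i ∉ hfin.toFinset := fun h => hi (hF h)
    rw [Set.Finite.mem_toFinset, Set.mem_ofPred_eq, not_not, dist_zero_right] at hi'
    exact hi'.le

end lp

section Hellinger

variable {ι : Type*} (F : Finset ι) {α β a b : ι → ℝ}

lemma abs_sum_sqrt_mul_sqrt_sub_one_le (hα : ∀ i ∈ F, 0 ≤ α i) (hβ : ∀ i ∈ F, 0 ≤ β i)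
    (hα1 : ∑ i ∈ F, α i = 1) (hβ1 : ∑ i ∈ F, β i = 1) :
    |∑ i ∈ F, √(α i) * √(β i) - 1| ≤ ∑ i ∈ F, |α i - β i| := by
  have hlow : ∀ i ∈ F, α i - |α i - β i| ≤ √(α i) * √(β i) := by
    intro i hi
    rcases le_total (α i) (β i) with h | h
    · have := mul_le_mul_of_nonneg_left (Real.sqrt_le_sqrt h) (Real.sqrt_nonneg (α i))
      rw [Real.mul_self_sqrt (hα i hi)] at this
      linarith [abs_nonneg (α i - β i)]
    · have := mul_le_mul_of_nonneg_right (Real.sqrt_le_sqrt h) (Real.sqrt_nonneg (β i))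
      rw [Real.mul_self_sqrt (hβ i hi)] at this
      rw [abs_of_nonneg (sub_nonneg.mpr h)]
      linarith
  have hup : ∀ i ∈ F, √(α i) * √(β i) ≤ (α i + β i) / 2 := fun i hi => by
    nlinarith [Real.sq_sqrt (hα i hi), Real.sq_sqrt (hβ i hi), sq_nonneg (√(α i) - √(β i))]
  have h1 := Finset.sum_le_sum hlow
  have h2 := Finset.sum_le_sum hup
  rw [Finset.sum_sub_distrib, hα1] at h1
  rw [← Finset.sum_div, Finset.sum_add_distrib, hα1, hβ1] at h2
  have h3 : 0 ≤ ∑ i ∈ F, |α i - β i| := Finset.sum_nonneg fun i _ => abs_nonneg _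
  rw [abs_le]
  constructor <;> linarith

lemma sum_abs_div_sub_div_le (hb : ∀ i ∈ F, 0 ≤ b i) (hA : 0 < ∑ i ∈ F, a i)
    (hB : 0 < ∑ i ∈ F, b i) :
    ∑ i ∈ F, |a i / ∑ j ∈ F, a j - b i / ∑ j ∈ F, b j| ≤
      2 * (∑ i ∈ F, |a i - b i|) / ∑ i ∈ F, a i := by
  set A := ∑ i ∈ F, a i
  set B := ∑ i ∈ F, b i
  have hpt : ∀ i ∈ F, |a i / A - b i / B| ≤ |a i - b i| / A + b i / B * (|B - A| / A) := by
    intro i hi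
    have : a i / A - b i / B = (a i - b i) / A + b i / B * ((B - A) / A) := by
      field_simp
      ring
    rw [this]
    refine (abs_add_le _ _).trans_eq ?_
    rw [abs_div, abs_mul, abs_div, abs_div, abs_of_pos hA, abs_of_pos hB, abs_of_nonneg (hb i hi)]
  have hBA : |B - A| ≤ ∑ i ∈ F, |a i - b i| := by
    rw [← Finset.sum_sub_distrib]
    exact (Finset.abs_sum_le_sum_abs _ _).trans_eq
      (Finset.sum_congr rfl fun i _ => abs_sub_comm _ _)
  calc ∑ i ∈ F, |a i / A - b i / B|
      ≤ ∑ i ∈ F, (|a i - b i| / A + b i / B * (|B - A| / A)) := Finset.sum_le_sum hpt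
    _ = (∑ i ∈ F, |a i - b i|) / A + |B - A| / A := by
        rw [Finset.sum_add_distrib, ← Finset.sum_div, ← Finset.sum_mul, ← Finset.sum_div,
          div_self hB.ne', one_mul]
    _ ≤ 2 * (∑ i ∈ F, |a i - b i|) / A := by
        rw [mul_div_assoc, two_mul]
        gcongr

lemma abs_sum_sqrt_div_mul_sqrt_div_sub_one_le (ha : ∀ i ∈ F, 0 ≤ a i) (hb : ∀ i ∈ F, 0 ≤ b i)
    (hA : 0 < ∑ i ∈ F, a i) (hB : 0 < ∑ i ∈ F, b i) :
    |∑ i ∈ F, √(a i / ∑ j ∈ F, a j) * √(b i / ∑ j ∈ F, b j) - 1| ≤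
      2 * (∑ i ∈ F, |a i - b i|) / ∑ i ∈ F, a i :=
  (abs_sum_sqrt_mul_sqrt_sub_one_le F (fun i hi => div_nonneg (ha i hi) hA.le)
    (fun i hi => div_nonneg (hb i hi) hB.le) (by rw [← Finset.sum_div, div_self hA.ne'])
    (by rw [← Finset.sum_div, div_self hB.ne'])).trans (sum_abs_div_sub_div_le F hb hA hB)

end Hellinger

namespace IsProperLength

variable {G : Type*} [Group G] {l : G → ℝ}

lemma abs_sub_le (hl : IsProperLength l) (s t : G) : |l (s * t) - l t| ≤ l s := by
  have h := hl.mul_le s⁻¹ (s * t)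
  rw [hl.inv_eq, inv_mul_cancel_left] at h
  rw [abs_le]
  constructor <;> linarith [hl.mul_le s t]

lemma pos_of_ne_one (hl : IsProperLength l) {s : G} (hs : s ≠ 1) : 0 < l s :=
  (hl.nonneg s).lt_of_ne' fun h => hs ((hl.eq_zero_iff s).mp h)

end IsProperLength

namespace DeltaGamma

variable {Γ Δ : Type*} [Group Δ]

lemma finite_mulSupport (y : DeltaGamma Γ Δ) : (mulSupport (y : Γ → Δ)).Finite := y.2

noncomputable def supp (y : DeltaGamma Γ Δ) : Finset Γ := (finite_mulSupport y).toFinset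

@[simp]
lemma mem_supp {y : DeltaGamma Γ Δ} {t : Γ} : t ∈ supp y ↔ (y : Γ → Δ) t ≠ 1 := by
  rw [supp, Set.Finite.mem_toFinset, mem_mulSupport]

lemma supp_nonempty {y : DeltaGamma Γ Δ} (hy : y ≠ 1) : (supp y).Nonempty := by
  contrapose! hy
  ext t
  simpa using Finset.eq_empty_iff_forall_notMem.mp hy t

variable [Group Γ]

@[simp]
lemma bshift_apply (s : Γ) (y : DeltaGamma Γ Δ) (t : Γ) :
    (bshift s y : Γ → Δ) t = (y : Γ → Δ) (s⁻¹ * t) := rfl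

lemma bshift_bshift (s s' : Γ) (y : DeltaGamma Γ Δ) :
    bshift s (bshift s' y) = bshift (s * s') y := by
  ext t
  simp [mul_assoc]

@[simp]
lemma bshift_one (y : DeltaGamma Γ Δ) : bshift 1 y = y := by
  ext t
  simp

@[simp]
lemma bshift_eq_one_iff {s : Γ} {y : DeltaGamma Γ Δ} : bshift s y = 1 ↔ y = 1 := by
  refine ⟨fun h => ?_, fun h => ?_⟩
  · rw [← bshift_one y, ← inv_mul_cancel s, ← bshift_bshift, h]
    ext t
    simp
  · subst h
    ext t
    simp

lemma supp_bshift (s : Γ) (y : DeltaGamma Γ Δ) :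
    supp (bshift s y) = (supp y).map (mulLeftEmbedding s) := by
  ext t
  simp only [mem_supp, bshift_apply, Finset.mem_map, mulLeftEmbedding_apply]
  exact ⟨fun h => ⟨_, h, mul_inv_cancel_left s t⟩, by rintro ⟨u, hu, rfl⟩; simpa using hu⟩

end DeltaGamma

section Weights

open DeltaGamma Finset

variable {Γ Δ : Type*} [Group Δ] {lG : Γ → ℝ} {lD : Δ → ℝ}

lemma wt_of_ne_one {y : Γ → Δ} {t : Γ} (h : y t ≠ 1) : wt lG lD y t = lG t + lD (y t) := by
  simp [wt, h]

lemma wt_of_eq_one {y : Γ → Δ} {t : Γ} (h : y t = 1) : wt lG lD y t = 0 := by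
  simp [wt, h]

lemma w_eq_sum_s15 (y : DeltaGamma Γ Δ) : w lG lD y = ∑ t ∈ supp y, wt lG lD y t :=
  finsum_eq_sum_of_support_subset _ fun t ht => by
    contrapose! ht
    exact notMem_support.mpr (wt_of_eq_one (by simpa using ht))

variable [Group Γ] (hG : IsProperLength lG) (hD : IsProperLength lD)
include hG hD

lemma wt_pos {y : Γ → Δ} {t : Γ} (h : y t ≠ 1) : 0 < wt lG lD y t := by
  rw [wt_of_ne_one h]
  linarith [hG.nonneg t, hD.pos_of_ne_one h]

lemma wt_nonneg (y : Γ → Δ) (t : Γ) : 0 ≤ wt lG lD y t := by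
  by_cases h : y t = 1
  · rw [wt_of_eq_one h]
  · exact (wt_pos hG hD h).le

lemma w_pos {y : DeltaGamma Γ Δ} (hy : y ≠ 1) : 0 < w lG lD y := by
  rw [w_eq_sum_s15]
  exact Finset.sum_pos (fun t ht => wt_pos hG hD (mem_supp.mp ht)) (supp_nonempty hy)

lemma wt_le_w (y : DeltaGamma Γ Δ) (t : Γ) : wt lG lD y t ≤ w lG lD y := by
  by_cases h : (y : Γ → Δ) t = 1
  · rw [wt_of_eq_one h, w_eq_sum_s15]
    exact Finset.sum_nonneg fun u _ => wt_nonneg hG hD _ u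
  · rw [w_eq_sum_s15]
    exact Finset.single_le_sum (fun u _ => wt_nonneg hG hD _ u) (mem_supp.mpr h)

lemma finite_setOf_w_le_s15 (R : ℝ) : {y : DeltaGamma Γ Δ | w lG lD y ≤ R}.Finite := by
  have hbound : ∀ y : DeltaGamma Γ Δ, w lG lD y ≤ R → ∀ t, (y : Γ → Δ) t ≠ 1 →
      lG t ≤ R ∧ lD ((y : Γ → Δ) t) ≤ R := fun y hy t ht => by
    have := (wt_le_w hG hD y t).trans hy
    rw [wt_of_ne_one ht] at this
    constructor <;> linarith [hG.nonneg t, hD.nonneg ((y : Γ → Δ) t)]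
  have : Finite {t : Γ | lG t ≤ R} := (hG.proper R).to_subtype
  let restrict : DeltaGamma Γ Δ → {t : Γ | lG t ≤ R} → Δ := fun y t => (y : Γ → Δ) t
  refine Set.Finite.of_finite_image (f := restrict) ?_ fun y hy y' hy' h => ?_
  · refine (Set.Finite.pi' fun _ => ((hD.proper R).insert 1)).subset ?_
    rintro _ ⟨y, hy, rfl⟩ t
    by_cases ht : (y : Γ → Δ) t = 1
    · exact Or.inl ht
    · exact Or.inr (hbound y hy t ht).2
  · ext t
    by_cases hR : lG t ≤ R
    · exact congrFun h ⟨t, hR⟩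
    · have vanish : ∀ z : DeltaGamma Γ Δ, w lG lD z ≤ R → (z : Γ → Δ) t = 1 := fun z hz => by
        by_contra hzt
        exact hR (hbound z hz t hzt).1
      rw [vanish y hy, vanish y' hy']

lemma w_le_of_w_le_mul_card {C : ℝ} (hC : 0 ≤ C) {y : DeltaGamma Γ Δ}
    (hy : w lG lD y ≤ C * #(supp y)) : w lG lD y ≤ 2 * C * #(hG.proper (2 * C)).toFinset := by
  classical
  set S := (hG.proper (2 * C)).toFinset
  set O := supp y \ S
  have hO : 2 * C * #O ≤ w lG lD y :=
    calc 2 * C * #O = ∑ _t ∈ O, 2 * C := by rw [Finset.sum_const, nsmul_eq_mul, mul_comm]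
      _ ≤ ∑ t ∈ O, wt lG lD y t := Finset.sum_le_sum fun t ht => by
          obtain ⟨hty, htS⟩ := Finset.mem_sdiff.mp ht
          have hlt : 2 * C < lG t := by simpa [S] using htS
          rw [wt_of_ne_one (mem_supp.mp hty)]
          linarith [hD.nonneg ((y : Γ → Δ) t)]
      _ ≤ w lG lD y := by
          rw [w_eq_sum_s15]
          exact Finset.sum_le_sum_of_subset_of_nonneg Finset.sdiff_subset
            fun t _ _ => wt_nonneg hG hD _ t
  have hcard : (#(supp y) : ℝ) ≤ #O + #S := by exact_mod_cast Finset.card_le_card_sdiff_add_card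
  have := mul_le_mul_of_nonneg_left hcard hC
  linarith

lemma finite_setOf_w_le_mul_card {C : ℝ} (hC : 0 ≤ C) :
    {y : DeltaGamma Γ Δ | w lG lD y ≤ C * #(supp y)}.Finite :=
  (finite_setOf_w_le_s15 hG hD _).subset fun _ hy => w_le_of_w_le_mul_card hG hD hC hy

end Weights

section Overlap

open DeltaGamma Finset

variable {Γ Δ : Type*} [Group Γ] [Group Δ] {lG : Γ → ℝ} {lD : Δ → ℝ}

open Classical in
noncomputable def xiSupport (y : DeltaGamma Γ Δ) : Finset Γ := if y = 1 then {1} else supp y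

lemma xiC_eq_zero_of_notMem {y : DeltaGamma Γ Δ} {t : Γ} (ht : t ∉ xiSupport y) :
    xiC lG lD y t = 0 := by
  by_cases hy : y = 1
  · simp_all [xiSupport, xiC]
  · have : (y : Γ → Δ) t = 1 := by simpa [xiSupport, hy] using ht
    simp [xiC, hy, wt_of_eq_one this]

@[simp]
lemma conj_xiC (y : DeltaGamma Γ Δ) (t : Γ) :
    starRingEnd ℂ (xiC lG lD y t) = xiC lG lD y t := by
  unfold xiC
  split_ifs <;> simp

variable (lG lD) in
noncomputable def xiOverlap (s : Γ) (y : DeltaGamma Γ Δ) : ℂ :=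
  ∑ t ∈ xiSupport y, xiC lG lD y t * xiC lG lD (bshift s y) (s * t)

variable (hG : IsProperLength lG) (hD : IsProperLength lD)
include hG hD

lemma norm_xiOverlap_sub_one_le (s : Γ) {y : DeltaGamma Γ Δ} (hy : y ≠ 1) :
    ‖xiOverlap lG lD s y - 1‖ ≤ 2 * (#(supp y) * lG s) / w lG lD y := by
  have hsy : bshift s y ≠ 1 := by simpa using hy
  set a : Γ → ℝ := fun t => wt lG lD y t
  set b : Γ → ℝ := fun t => wt lG lD (bshift s y) (s * t)
  have hA : w lG lD y = ∑ t ∈ supp y, a t := w_eq_sum_s15 y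
  have hB : w lG lD (bshift s y) = ∑ t ∈ supp y, b t := by
    rw [w_eq_sum_s15, supp_bshift, sum_map]
    rfl
  have hoverlap : xiOverlap lG lD s y =
      ((∑ t ∈ supp y, √(a t / ∑ u ∈ supp y, a u) * √(b t / ∑ u ∈ supp y, b u) : ℝ) : ℂ) := by
    simp [xiOverlap, xiSupport, xiC, hy, hsy, ← hA, ← hB, a, b]
  have hab : ∀ t ∈ supp y, |a t - b t| ≤ lG s := fun t ht => by
    have hyt := mem_supp.mp ht
    have hsyt : (bshift s y : Γ → Δ) (s * t) ≠ 1 := by simpa using hyt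
    simp only [a, b, wt_of_ne_one hyt, wt_of_ne_one hsyt, bshift_apply, inv_mul_cancel_left]
    rw [abs_sub_comm]
    simpa using hG.abs_sub_le s t
  rw [hoverlap, ← Complex.ofReal_one, ← Complex.ofReal_sub, Complex.norm_real, Real.norm_eq_abs,
    hA]
  refine (abs_sum_sqrt_div_mul_sqrt_div_sub_one_le _ (fun t _ => wt_nonneg hG hD _ t)
    (fun t _ => wt_nonneg hG hD _ _) (hA ▸ w_pos hG hD hy) (hB ▸ w_pos hG hD hsy)).trans ?_
  gcongr
  · exact (hA ▸ w_pos hG hD hy).le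
  · simpa using sum_le_sum hab

lemma tendsto_xiOverlap_sub_one (s : Γ) :
    Tendsto (fun y => xiOverlap lG lD s y - 1) cofinite (𝓝 0) := by
  refine Metric.tendsto_nhds.mpr fun ε hε => eventually_cofinite.mpr ?_
  have hC : 0 ≤ 2 * lG s / ε := div_nonneg (mul_nonneg zero_le_two (hG.nonneg s)) hε.le
  refine (finite_setOf_w_le_mul_card hG hD hC).subset fun y hy => ?_
  simp only [Set.mem_ofPred_eq, not_lt, dist_zero_right] at hy ⊢
  by_cases hy1 : y = 1
  · simpa [hy1, w, wt] using mul_nonneg hC (#(supp y)).cast_nonneg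
  have := hy.trans (norm_xiOverlap_sub_one_le hG hD s hy1)
  rw [le_div_iff₀ (w_pos hG hD hy1)] at this
  rw [div_mul_eq_mul_div, le_div_iff₀ hε]
  linarith

end Overlap

section Operators

open DeltaGamma

variable {Γ Δ : Type*} [Group Γ] [Group Δ] [DecidableEq Γ] [DecidableEq (Γ → Δ)]
  {lG : Γ → ℝ} {lD : Δ → ℝ} {V : ℓ²(DeltaGamma Γ Δ) →ₗᵢ[ℂ] ℓ²(DeltaGamma Γ Δ × Γ)}

lemma apply_single_eq_sum_xiC
    (hV : ∀ (y z : DeltaGamma Γ Δ) (t : Γ),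
      (V (lp.single 2 y 1)) (z, t) = if z = y then xiC lG lD y t else 0) (y : DeltaGamma Γ Δ) :
    V (lp.single 2 y 1) = ∑ t ∈ xiSupport y, xiC lG lD y t • lp.single 2 (y, t) 1 := by
  ext ⟨z, t⟩
  rw [hV, lp.coeFn_sum, Finset.sum_apply]
  simp only [lp.coeFn_smul, Pi.smul_apply, lp.single_one_apply, Prod.ext_iff, smul_eq_mul,
    mul_ite, mul_one, mul_zero]
  by_cases hz : z = y
  · simp only [hz, true_and, if_true, Finset.sum_ite_eq]
    split_ifs with ht
    · rfl
    · exact xiC_eq_zero_of_notMem ht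
  · simp [hz]

lemma adjoint_apply_apply_single_eq_xiOverlap_smul
    (hV : ∀ (y z : DeltaGamma Γ Δ) (t : Γ),
      (V (lp.single 2 y 1)) (z, t) = if z = y then xiC lG lD y t else 0)
    {s : Γ} {W : ℓ²(DeltaGamma Γ Δ × Γ) →L[ℂ] ℓ²(DeltaGamma Γ Δ × Γ)}
    (hW : ∀ (y : DeltaGamma Γ Δ) (t : Γ),
      W (lp.single 2 (y, t) 1) = lp.single 2 (bshift s y, s * t) 1)
    (y : DeltaGamma Γ Δ) :
    V.toContinuousLinearMap.adjoint (W (V (lp.single 2 y 1))) =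
      xiOverlap lG lD s y • lp.single 2 (bshift s y) 1 := by
  ext z
  rw [lp.adjoint_apply, apply_single_eq_sum_xiC hV, map_sum]
  simp only [map_smul, hW, inner_sum, inner_smul_right, lp.inner_single_right,
    LinearIsometry.coe_toContinuousLinearMap, hV]
  by_cases h : bshift s y = z
  · subst h
    simp [RCLike.inner_apply, xiOverlap]
  · simp [h, Ne.symm h]

end Operators

theorem stmt15_general {Γ Δ : Type*} [Group Γ] [Group Δ]
    [DecidableEq Γ] [DecidableEq (Γ → Δ)]
    (lG : Γ → ℝ) (lD : Δ → ℝ) (hG : IsProperLength lG) (hD : IsProperLength lD)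
    (V : lp (fun _ : DeltaGamma Γ Δ => ℂ) 2 →ₗᵢ[ℂ] lp (fun _ : DeltaGamma Γ Δ × Γ => ℂ) 2)
    (hV : ∀ (y z : DeltaGamma Γ Δ) (t : Γ),
      (V (lp.single 2 y 1)) (z, t) = if z = y then xiC lG lD y t else 0)
    (W : Γ → (lp (fun _ : DeltaGamma Γ Δ × Γ => ℂ) 2 →L[ℂ]
              lp (fun _ : DeltaGamma Γ Δ × Γ => ℂ) 2))
    (hW : ∀ (s : Γ) (y : DeltaGamma Γ Δ) (t : Γ),
      W s (lp.single 2 (y, t) 1) = lp.single 2 (bshift s y, s * t) 1)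
    (σ : Γ → (lp (fun _ : DeltaGamma Γ Δ => ℂ) 2 →L[ℂ]
              lp (fun _ : DeltaGamma Γ Δ => ℂ) 2))
    (hσ : ∀ (s : Γ) (y : DeltaGamma Γ Δ),
      σ s (lp.single 2 y 1) = lp.single 2 (bshift s y) 1)
    (s : Γ) :
    IsCompactOperator
      ((ContinuousLinearMap.adjoint V.toContinuousLinearMap).comp
        ((W s).comp V.toContinuousLinearMap) - σ s) := by
  set T := (ContinuousLinearMap.adjoint V.toContinuousLinearMap).comp
    ((W s).comp V.toContinuousLinearMap) - σ s
  have hT : ∀ y, T (lp.single 2 y 1) = (xiOverlap lG lD s y - 1) • lp.single 2 (bshift s y) 1 :=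
    fun y => by simp [T, adjoint_apply_apply_single_eq_xiOverlap_smul hV (hW s), hσ, sub_smul]
  have hdiag : ∀ y, ((σ s⁻¹).comp T) (lp.single 2 y 1) =
      (xiOverlap lG lD s y - 1) • lp.single 2 y 1 :=
    fun y => by simp [hT, hσ, DeltaGamma.bshift_bshift]
  have hfactor : T = (σ s).comp ((σ s⁻¹).comp T) :=
    lp.ext_single_one fun y => by simp [hdiag, hT, hσ]
  rw [hfactor]
  exact (lp.isCompactOperator_of_apply_single hdiag (tendsto_xiOverlap_sub_one hG hD s)).clm_comp
    (σ s)

/-- Let `V : ℓ²(Δ_Γ) → ℓ²(Δ_Γ × Γ)` be the isometry `Vδ_y = δ_y ⊗ ξ_y`,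
let `W(s)` be the unitary of `ℓ²(Δ_Γ × Γ)` permuting the basis by
`δ_{(y,t)} ↦ δ_{(s·y, st)}`, and let `σ(s)δ_y = δ_{s·y}` on `ℓ²(Δ_Γ)` (with `s·y` the
Bernoulli shift). Then `V* W(s) V − σ(s)` is a compact operator for every `s ∈ Γ`. -/
theorem stmt15 {Γ Δ : Type*} [Group Γ] [Group Δ] [Countable Γ] [Countable Δ]
    [DecidableEq Γ] [DecidableEq (Γ → Δ)]
    (lG : Γ → ℝ) (lD : Δ → ℝ) (hG : IsProperLength lG) (hD : IsProperLength lD)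
    (V : lp (fun _ : DeltaGamma Γ Δ => ℂ) 2 →ₗᵢ[ℂ] lp (fun _ : DeltaGamma Γ Δ × Γ => ℂ) 2)
    (hV : ∀ (y z : DeltaGamma Γ Δ) (t : Γ),
      (V (lp.single 2 y 1)) (z, t) = if z = y then xiC lG lD y t else 0)
    (W : Γ → (lp (fun _ : DeltaGamma Γ Δ × Γ => ℂ) 2 →L[ℂ]
              lp (fun _ : DeltaGamma Γ Δ × Γ => ℂ) 2))
    (hW : ∀ (s : Γ) (y : DeltaGamma Γ Δ) (t : Γ),
      W s (lp.single 2 (y, t) 1) = lp.single 2 (bshift s y, s * t) 1)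
    (σ : Γ → (lp (fun _ : DeltaGamma Γ Δ => ℂ) 2 →L[ℂ]
              lp (fun _ : DeltaGamma Γ Δ => ℂ) 2))
    (hσ : ∀ (s : Γ) (y : DeltaGamma Γ Δ),
      σ s (lp.single 2 y 1) = lp.single 2 (bshift s y) 1)
    (s : Γ) :
    IsCompactOperator
      ((ContinuousLinearMap.adjoint V.toContinuousLinearMap).comp
        ((W s).comp V.toContinuousLinearMap) - σ s) :=
  stmt15_general lG lD hG hD V hV W hW σ hσ s
end
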